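/- arXiv:0905.3005 — 4 statements merged into one kernel-verified Lean document; each statement's English description precedes it below -/
import Mathlib

section
/- Let A be an n×n real L-matrix (a matrix with a_{ij} ≤ 0 for all i ≠ j and a_{ii} > 0 for all i) that is essentially diagonally dominant, i.e. A is weakly diagonally dominant (|a_{ii}| ≥ Σ_{k≠i} |a_{ik}| for every i) and every index i is connected in the matrix graph G(A) = {(i,j) : a_{ij} ≠ 0} (via a finite chain i = i_0, i_1, …, i_k = j with (i_{ν-1}, i_ν) ∈ G(A)) to some index j satisfying the strict diagonal dominance relation |a_{jj}| > Σ_{k≠j} |a_{jk}|. Then A is an M-matrix, i.e. A is invertible and all entries of A^{-1} are nonnegative. -/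
open Matrix BigOperators

/-- Sum of absolute values of off-diagonal entries equals minus their sum, for a Z-matrix row. -/
lemma zrow_abs_sum {n : ℕ} (A : Matrix (Fin n) (Fin n) ℝ)
    (hZ : ∀ i j, i ≠ j → A i j ≤ 0) (i : Fin n) :
    ∑ k ∈ Finset.univ.erase i, |A i k| = -∑ k ∈ Finset.univ.erase i, A i k := by
  rw [← Finset.sum_neg_distrib]
  exact Finset.sum_congr rfl fun k hk =>
    abs_of_nonpos (hZ i k (Finset.ne_of_mem_erase hk).symm)

/-- Minimum principle, equality part: a row at the (negative) minimum has reversed dominance. -/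
lemma row_sum_ge {n : ℕ} (A : Matrix (Fin n) (Fin n) ℝ)
    (hZ : ∀ i j, i ≠ j → A i j ≤ 0)
    (x : Fin n → ℝ) (m : ℝ)
    (hmin : ∀ k, m ≤ x k) (hneg : m < 0)
    (i : Fin n) (hxi : x i = m)
    (h0 : 0 ≤ ∑ k, A i k * x k) :
    A i i ≤ ∑ k ∈ Finset.univ.erase i, |A i k| := by
  rw [← Finset.add_sum_erase Finset.univ _ (Finset.mem_univ i), hxi] at h0
  have hb : ∑ k ∈ Finset.univ.erase i, A i k * x k
      ≤ ∑ k ∈ Finset.univ.erase i, A i k * m := by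
    refine Finset.sum_le_sum fun k hk => ?_
    exact mul_le_mul_of_nonpos_left (hmin k) (hZ i k (Finset.ne_of_mem_erase hk).symm)
  rw [zrow_abs_sum A hZ i]
  set s := ∑ k ∈ Finset.univ.erase i, A i k with hs
  have hsum : ∑ k ∈ Finset.univ.erase i, A i k * m = s * m := by
    rw [hs, Finset.sum_mul]
  have h1 : 0 ≤ A i i * m + s * m := by
    rw [← hsum]; linarith
  nlinarith

/-- Minimum principle, propagation part: the set of minimizers is closed under graph edges. -/
lemma min_propagate {n : ℕ} (A : Matrix (Fin n) (Fin n) ℝ)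
    (hZ : ∀ i j, i ≠ j → A i j ≤ 0)
    (hL : ∀ i, 0 < A i i)
    (hwdd : ∀ i, ∑ k ∈ Finset.univ.erase i, |A i k| ≤ |A i i|)
    (x : Fin n → ℝ) (m : ℝ)
    (hmin : ∀ k, m ≤ x k) (hneg : m < 0)
    (i : Fin n) (hxi : x i = m)
    (h0 : 0 ≤ ∑ k, A i k * x k)
    (k : Fin n) (hik : A i k ≠ 0) (hki : k ≠ i) : x k = m := by
  by_contra h
  have hk' : m < x k := lt_of_le_of_ne (hmin k) (Ne.symm h)
  rw [← Finset.add_sum_erase Finset.univ _ (Finset.mem_univ i), hxi] at h0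
  have hb : ∑ j ∈ Finset.univ.erase i, A i j * x j
      < ∑ j ∈ Finset.univ.erase i, A i j * m := by
    refine Finset.sum_lt_sum (fun j hj =>
      mul_le_mul_of_nonpos_left (hmin j) (hZ i j (Finset.ne_of_mem_erase hj).symm))
      ⟨k, Finset.mem_erase.mpr ⟨hki, Finset.mem_univ k⟩, ?_⟩
    exact mul_lt_mul_of_neg_left hk' (lt_of_le_of_ne (hZ i k (Ne.symm hki)) hik)
  set s := ∑ j ∈ Finset.univ.erase i, A i j with hs
  have hsum : ∑ j ∈ Finset.univ.erase i, A i j * m = s * m := by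
    rw [hs, Finset.sum_mul]
  have h1 : 0 < A i i * m + s * m := by rw [← hsum]; linarith
  have h2 : -s ≤ A i i := by
    have := hwdd i
    rw [zrow_abs_sum A hZ i, abs_of_pos (hL i)] at this
    linarith
  nlinarith

/-- Key lemma: if `A x ≥ 0` entrywise, then `x ≥ 0` entrywise. -/
lemma key_nonneg {n : ℕ} (A : Matrix (Fin n) (Fin n) ℝ)
    (hZ : ∀ i j, i ≠ j → A i j ≤ 0)
    (hL : ∀ i, 0 < A i i)
    (hwdd : ∀ i, ∑ k ∈ Finset.univ.erase i, |A i k| ≤ |A i i|)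
    (hconn : ∀ i, ∃ j, Relation.ReflTransGen (fun a b => A a b ≠ 0) i j ∧
      ∑ k ∈ Finset.univ.erase j, |A j k| < |A j j|)
    (x : Fin n → ℝ) (hx : ∀ i, 0 ≤ ∑ k, A i k * x k) :
    ∀ i, 0 ≤ x i := by
  intro i
  obtain ⟨i₀, -, hmin⟩ := Finset.exists_min_image Finset.univ x ⟨i, Finset.mem_univ i⟩
  have hmin' : ∀ k, x i₀ ≤ x k := fun k => hmin k (Finset.mem_univ k)
  by_contra hcon
  push_neg at hcon
  have hneg : x i₀ < 0 := lt_of_le_of_lt (hmin' i) hcon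
  obtain ⟨j, hpath, hstrict⟩ := hconn i₀
  have hj : x j = x i₀ := by
    clear hstrict
    induction hpath with
    | refl => rfl
    | @tail b c _ hbc ih =>
      by_cases hcb : c = b
      · rw [hcb]; exact ih
      · exact min_propagate A hZ hL hwdd x (x i₀) hmin' hneg b ih (hx b) c hbc hcb
  have := row_sum_ge A hZ x (x i₀) hmin' hneg j hj (hx j)
  rw [abs_of_pos (hL j)] at hstrict
  linarith

/-- An essentially diagonally dominant L-matrix is an M-matrix. -/
theorem lmatrix_ess_diag_dom_is_mmatrix {n : ℕ} (A : Matrix (Fin n) (Fin n) ℝ)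
    (hZ : ∀ i j, i ≠ j → A i j ≤ 0)
    (hL : ∀ i, 0 < A i i)
    (hwdd : ∀ i, ∑ k ∈ Finset.univ.erase i, |A i k| ≤ |A i i|)
    (hconn : ∀ i, ∃ j, Relation.ReflTransGen (fun a b => A a b ≠ 0) i j ∧
      ∑ k ∈ Finset.univ.erase j, |A j k| < |A j j|) :
    IsUnit A ∧ ∀ i j, 0 ≤ A⁻¹ i j := by
  have key := key_nonneg A hZ hL hwdd hconn
  have hdet : A.det ≠ 0 := by
    intro hd
    obtain ⟨v, hv, hAv⟩ := (Matrix.exists_mulVec_eq_zero_iff).mpr hd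
    have hAv' : A *ᵥ (-v) = 0 := by rw [Matrix.mulVec_neg, hAv, neg_zero]
    have h1 : ∀ i, 0 ≤ v i := by
      refine key v fun i => ?_
      show (0:ℝ) ≤ A.mulVec v i
      rw [hAv]; rfl
    have h2 : ∀ i, 0 ≤ -v i := by
      refine key (-v) fun i => ?_
      show (0:ℝ) ≤ A.mulVec (-v) i
      rw [hAv']; rfl
    exact hv (funext fun i => le_antisymm (by simpa using h2 i) (h1 i))
  have hunit : IsUnit A := (Matrix.isUnit_iff_isUnit_det A).mpr (isUnit_iff_ne_zero.mpr hdet)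
  refine ⟨hunit, fun i j => ?_⟩
  have hmul : A * A⁻¹ = 1 := Matrix.mul_nonsing_inv A (isUnit_iff_ne_zero.mpr hdet)
  refine key (fun k => A⁻¹ k j) (fun i' => ?_) i
  have : ∑ k, A i' k * A⁻¹ k j = (A * A⁻¹) i' j := by
    simp [Matrix.mul_apply]
  rw [this, hmul, Matrix.one_apply]
  split <;> norm_num
end

section
/- Let A be an n×n real M-matrix with positive diagonal entries (i.e. A is an L-matrix that is invertible with A^{-1} ≥ 0 componentwise), and let D be the diagonal part of A. Then the spectral radius of the Jacobi iteration matrix satisfies ρ(I − D^{-1} A) < 1; in particular, the Jacobi iteration for the linear system A x = b converges for every initial vector. -/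
/-!
The Jacobi matrix `J = I - D⁻¹ A` of an L-matrix is entrywise nonnegative, and `I - J = D⁻¹ A`
has the entrywise nonnegative inverse `A⁻¹ D`. For an eigenpair `J v = μ v` the triangle
inequality gives `|μ| |v| ≤ J |v|`, hence `(I - J) |v| ≤ (1 - |μ|) |v|`; applying the
monotone map `A⁻¹ D` yields `|v| ≤ (1 - |μ|) A⁻¹ D |v|`, which forces `1 - |μ| > 0` at any
coordinate where `v` does not vanish.
-/

open Matrix

section Monotone

variable {m n R : Type*} [Fintype n] [Semiring R] [PartialOrder R] [IsOrderedRing R]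

lemma Matrix.mulVec_le_mulVec_of_nonneg {B : Matrix m n R} (hB : ∀ i j, 0 ≤ B i j)
    {x y : n → R} (hxy : x ≤ y) : B *ᵥ x ≤ B *ᵥ y :=
  fun i => dotProduct_le_dotProduct_of_nonneg_left hxy (hB i)

lemma Matrix.mulVec_nonneg_of_nonneg {B : Matrix m n R} (hB : ∀ i j, 0 ≤ B i j)
    {x : n → R} (hx : 0 ≤ x) : 0 ≤ B *ᵥ x :=
  fun i => dotProduct_nonneg_of_nonneg (hB i) hx

end Monotone

section Eigenvalue

variable {ι : Type*} [Fintype ι]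

lemma Matrix.norm_smul_norm_le_mulVec_norm {J : Matrix ι ι ℝ} (hJ : ∀ i j, 0 ≤ J i j)
    {μ : ℂ} {v : ι → ℂ} (heig : J.map (fun a : ℝ => (a : ℂ)) *ᵥ v = μ • v) :
    ‖μ‖ • (fun i => ‖v i‖) ≤ J *ᵥ fun i => ‖v i‖ := by
  intro i
  have hrow : ∑ j, (J i j : ℂ) * v j = μ * v i := by
    simpa [mulVec, dotProduct] using congrFun heig i
  calc ‖μ‖ * ‖v i‖ = ‖∑ j, (J i j : ℂ) * v j‖ := by rw [hrow, norm_mul]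
    _ ≤ ∑ j, ‖(J i j : ℂ) * v j‖ := norm_sum_le _ _
    _ = ∑ j, J i j * ‖v j‖ := by
      simp only [norm_mul, Complex.norm_real, Real.norm_of_nonneg (hJ i _)]

variable [DecidableEq ι]

theorem Matrix.norm_lt_one_of_mulVec_eq_smul {J B : Matrix ι ι ℝ} (hJ : ∀ i j, 0 ≤ J i j)
    (hB : ∀ i j, 0 ≤ B i j) (hBJ : B * (1 - J) = 1) {μ : ℂ} {v : ι → ℂ} (hv : v ≠ 0)
    (heig : J.map (fun a : ℝ => (a : ℂ)) *ᵥ v = μ • v) : ‖μ‖ < 1 := by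
  set w : ι → ℝ := fun i => ‖v i‖
  have hdefect : (1 - J) *ᵥ w ≤ (1 - ‖μ‖) • w := by
    rw [sub_mulVec, one_mulVec, sub_smul, one_smul]
    exact sub_le_sub_left (norm_smul_norm_le_mulVec_norm hJ heig) w
  have hw : w ≤ (1 - ‖μ‖) • (B *ᵥ w) :=
    calc w = B *ᵥ ((1 - J) *ᵥ w) := by rw [mulVec_mulVec, hBJ, one_mulVec]
      _ ≤ B *ᵥ ((1 - ‖μ‖) • w) := mulVec_le_mulVec_of_nonneg hB hdefect
      _ = (1 - ‖μ‖) • (B *ᵥ w) := mulVec_smul B _ w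
  obtain ⟨i, hi⟩ : ∃ i, v i ≠ 0 := Function.ne_iff.1 hv
  have hpos : 0 < (1 - ‖μ‖) * (B *ᵥ w) i := (norm_pos_iff.2 hi).trans_le (hw i)
  have hBw : 0 ≤ (B *ᵥ w) i := mulVec_nonneg_of_nonneg hB (fun j => norm_nonneg (v j)) i
  linarith [pos_of_mul_pos_left hpos hBw]

end Eigenvalue

section Jacobi

variable {ι K : Type*} [Fintype ι] [DecidableEq ι] [Field K]

lemma Matrix.inv_diagonal_of_ne_zero {d : ι → K} (hd : ∀ i, d i ≠ 0) :
    (diagonal d)⁻¹ = diagonal d⁻¹ :=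
  inv_eq_right_inv <| by
    rw [diagonal_mul_diagonal, ← diagonal_one]
    exact congrArg diagonal (funext fun i => mul_inv_cancel₀ (hd i))

noncomputable def Matrix.jacobiMatrix (A : Matrix ι ι K) : Matrix ι ι K :=
  1 - (diagonal fun i => A i i)⁻¹ * A

variable {A : Matrix ι ι K}

lemma Matrix.inv_mul_diagonal_mul_one_sub_jacobiMatrix (hA : IsUnit A) (hL : ∀ i, A i i ≠ 0) :
    A⁻¹ * diagonal (fun i => A i i) * (1 - A.jacobiMatrix) = 1 := by
  have hD : IsUnit (diagonal fun i => A i i) :=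
    isUnit_diagonal.2 (Pi.isUnit_iff.2 fun i => (hL i).isUnit)
  rw [jacobiMatrix, sub_sub_cancel, Matrix.mul_assoc, ← Matrix.mul_assoc _ _ A,
    mul_nonsing_inv _ ((isUnit_iff_isUnit_det _).1 hD), Matrix.one_mul,
    nonsing_inv_mul _ ((isUnit_iff_isUnit_det _).1 hA)]

lemma Matrix.jacobiMatrix_nonneg [LinearOrder K] [IsStrictOrderedRing K]
    (hZ : ∀ i j, i ≠ j → A i j ≤ 0) (hL : ∀ i, 0 < A i i) (i j : ι) :
    0 ≤ A.jacobiMatrix i j := by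
  rw [jacobiMatrix, inv_diagonal_of_ne_zero fun i => (hL i).ne', sub_apply, diagonal_mul,
    one_apply]
  by_cases hij : i = j
  · subst hij
    simp [(hL i).ne']
  · simp only [if_neg hij, Pi.inv_apply, zero_sub, neg_nonneg]
    exact mul_nonpos_of_nonneg_of_nonpos (inv_nonneg.2 (hL i).le) (hZ i j hij)

end Jacobi

/-- If `A` is an M-matrix with positive diagonal entries (an invertible L-matrix with
componentwise nonnegative inverse) and `D` is its diagonal part, then every complex
eigenvalue of the Jacobi iteration matrix `I - D⁻¹ A` has modulus less than one,
i.e. `ρ(I - D⁻¹ A) < 1` and the Jacobi iteration converges. -/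
theorem mmatrix_jacobi_spectral_radius_lt_one {n : ℕ} (A : Matrix (Fin n) (Fin n) ℝ)
    (hZ : ∀ i j, i ≠ j → A i j ≤ 0)
    (hL : ∀ i, 0 < A i i)
    (hA : IsUnit A) (hinv : ∀ i j, 0 ≤ A⁻¹ i j) :
    ∀ (μ : ℂ) (v : Fin n → ℂ), v ≠ 0 →
      ((1 - (Matrix.diagonal fun i => A i i)⁻¹ * A).map (fun a : ℝ => (a : ℂ))).mulVec v
        = μ • v →
      ‖μ‖ < 1 := by
  intro μ v hv heig
  have hB : ∀ i j, 0 ≤ (A⁻¹ * diagonal fun i => A i i) i j := fun i j => by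
    rw [mul_diagonal]
    exact mul_nonneg (hinv i j) (hL j).le
  exact norm_lt_one_of_mulVec_eq_smul (jacobiMatrix_nonneg hZ hL) hB
    (inv_mul_diagonal_mul_one_sub_jacobiMatrix hA fun i => (hL i).ne') hv heig
end

section
/- Let A be an n×n real M-matrix with positive diagonal entries (i.e. A is an L-matrix that is invertible with A^{-1} ≥ 0 componentwise). Write A = D − E − F, where D is the diagonal part of A, −E is the strictly lower triangular part, and −F is the strictly upper triangular part. Then the Gauss–Seidel iteration matrix satisfies ρ((D − E)^{-1} F) < 1; in particular, the Gauss–Seidel iteration for A x = b converges for every initial vector. -/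
/-!
If `(D - E)⁻¹ F v = μ v` with `|μ| ≥ 1`, then `(D - E - μ⁻¹ F) v = 0`, and the entries of
`D - E - μ⁻¹ F` are dominated in modulus by those of `A`: equal on and below the diagonal,
shrunk by `|μ⁻¹| ≤ 1` above it. Taking moduli row by row gives `A |v| ≤ 0` for the vector
`|v|` of moduli, hence `|v| = A⁻¹ (A |v|) ≤ 0` because `A⁻¹ ≥ 0`, so `v = 0`.
-/

open Finset

namespace Matrix

variable {ι : Type*}

section Splitting

variable [LinearOrder ι] {R : Type*}

/-- `D - E` in the splitting `A = D - E - F`. -/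
def lowerPart [Zero R] (A : Matrix ι ι R) : Matrix ι ι R :=
  of fun i j => if j ≤ i then A i j else 0

/-- `F` in the splitting `A = D - E - F`. -/
def negStrictUpperPart [Neg R] [Zero R] (A : Matrix ι ι R) : Matrix ι ι R :=
  of fun i j => if i < j then -A i j else 0

theorem det_lowerPart [Fintype ι] [CommRing R] (A : Matrix ι ι R) :
    (lowerPart A).det = ∏ i, A i i := by
  rw [det_of_isLowerTriangular]
  · simp [lowerPart]
  · intro i j hij
    simp [lowerPart, (OrderDual.toDual_lt_toDual.mp hij).not_ge]

theorem norm_lowerPart_sub_smul_negStrictUpperPart_le {A : Matrix ι ι ℝ}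
    (hZ : ∀ i j, i ≠ j → A i j ≤ 0) {t : ℂ} (ht : ‖t‖ ≤ 1) {i j : ι} (hij : i ≠ j) :
    ‖((lowerPart A).map (↑) - t • (negStrictUpperPart A).map (↑) : Matrix ι ι ℂ) i j‖
      ≤ -A i j := by
  have hA : |A i j| = -A i j := abs_of_nonpos (hZ i j hij)
  rcases hij.lt_or_gt with hlt | hgt
  · calc _ = ‖t‖ * -A i j := by simp [lowerPart, negStrictUpperPart, hlt, hlt.not_ge, hA]
      _ ≤ -A i j := mul_le_of_le_one_left (hA ▸ abs_nonneg _) ht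
  · simp [lowerPart, negStrictUpperPart, hgt.le, hgt.not_gt, hA]

end Splitting

variable [Fintype ι] [DecidableEq ι]

theorem mulVec_map_eq_smul_mulVec_map_of_inv_mul {K S : Type*} [CommRing K] [CommRing S]
    (f : K →+* S) {M N : Matrix ι ι K} (hM : IsUnit M.det) {μ : S} {v : ι → S}
    (h : (M⁻¹ * N).map f *ᵥ v = μ • v) : N.map f *ᵥ v = μ • (M.map f *ᵥ v) := by
  have hMM : M.map f * M⁻¹.map f = 1 := by
    rw [← Matrix.map_mul, mul_nonsing_inv M hM, Matrix.map_one _ f.map_zero f.map_one]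
  rw [← mulVec_smul, ← h, Matrix.map_mul, mulVec_mulVec, ← Matrix.mul_assoc, hMM,
    Matrix.one_mul]

theorem norm_mul_norm_le_sum_of_mulVec_eq_zero {K : Type*} [NormedField K]
    {B : Matrix ι ι K} {v : ι → K} (hv : B *ᵥ v = 0) (i : ι) :
    ‖B i i‖ * ‖v i‖ ≤ ∑ j ∈ univ.erase i, ‖B i j‖ * ‖v j‖ := by
  have hrow : B i i * v i = -∑ j ∈ univ.erase i, B i j * v j := by
    have := congrFun hv i
    rw [mulVec, dotProduct, ← add_sum_erase _ _ (mem_univ i)] at this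
    exact eq_neg_of_add_eq_zero_left this
  calc ‖B i i‖ * ‖v i‖ = ‖∑ j ∈ univ.erase i, B i j * v j‖ := by rw [← norm_mul, hrow, norm_neg]
    _ ≤ ∑ j ∈ univ.erase i, ‖B i j‖ * ‖v j‖ := by
      simpa only [norm_mul] using norm_sum_le (univ.erase i) fun j => B i j * v j

theorem mulVec_norm_nonpos_of_mulVec_eq_zero {K : Type*} [NormedField K]
    {A : Matrix ι ι ℝ} {B : Matrix ι ι K} (hdiag : ∀ i, A i i ≤ ‖B i i‖)
    (hoff : ∀ i j, i ≠ j → ‖B i j‖ ≤ -A i j) {v : ι → K} (hv : B *ᵥ v = 0) (i : ι) :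
    (A *ᵥ fun j => ‖v j‖) i ≤ 0 := by
  have hsum : ∑ j ∈ univ.erase i, ‖B i j‖ * ‖v j‖ ≤ -∑ j ∈ univ.erase i, A i j * ‖v j‖ := by
    rw [← sum_neg_distrib]
    refine sum_le_sum fun j hj => ?_
    rw [← neg_mul]
    exact mul_le_mul_of_nonneg_right (hoff i j (ne_of_mem_erase hj).symm) (norm_nonneg _)
  have hdiag' := mul_le_mul_of_nonneg_right (hdiag i) (norm_nonneg (v i))
  rw [mulVec, dotProduct, ← add_sum_erase _ _ (mem_univ i)]
  linarith [norm_mul_norm_le_sum_of_mulVec_eq_zero hv i]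

theorem nonpos_of_mulVec_nonpos {A : Matrix ι ι ℝ} (hA : IsUnit A) (hinv : ∀ i j, 0 ≤ A⁻¹ i j)
    {u : ι → ℝ} (hu : ∀ i, (A *ᵥ u) i ≤ 0) (i : ι) : u i ≤ 0 := by
  rw [← one_mulVec u, ← nonsing_inv_mul A ((isUnit_iff_isUnit_det A).mp hA), ← mulVec_mulVec]
  exact sum_nonpos fun j _ => mul_nonpos_of_nonneg_of_nonpos (hinv i j) (hu j)

end Matrix

open Matrix

/-- If `A` is an M-matrix with positive diagonal entries (an invertible L-matrix with
componentwise nonnegative inverse), written as `A = D - E - F` with `D` the diagonal,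
`-E` the strictly lower and `-F` the strictly upper triangular parts, then every complex
eigenvalue of the Gauss–Seidel iteration matrix `(D - E)⁻¹ F` has modulus less than one,
i.e. `ρ((D - E)⁻¹ F) < 1` and the Gauss–Seidel iteration converges. -/
theorem mmatrix_gauss_seidel_spectral_radius_lt_one {n : ℕ} (A : Matrix (Fin n) (Fin n) ℝ)
    (hZ : ∀ i j, i ≠ j → A i j ≤ 0)
    (hL : ∀ i, 0 < A i i)
    (hA : IsUnit A) (hinv : ∀ i j, 0 ≤ A⁻¹ i j) :
    ∀ (μ : ℂ) (v : Fin n → ℂ), v ≠ 0 →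
      (((Matrix.of fun i j : Fin n => if j ≤ i then A i j else 0)⁻¹ *
          (Matrix.of fun i j : Fin n => if i < j then -A i j else 0)).map
        (fun a : ℝ => (a : ℂ))).mulVec v = μ • v →
      ‖μ‖ < 1 := by
  intro μ v hv heig
  by_contra! hμ
  have hμ0 : μ ≠ 0 := norm_pos_iff.mp (one_pos.trans_le hμ)
  have hdet : IsUnit (lowerPart A).det := by
    rw [det_lowerPart]
    exact (prod_pos fun i _ => hL i).ne'.isUnit
  have hGS : (negStrictUpperPart A).map (↑) *ᵥ v = μ • ((lowerPart A).map (↑) *ᵥ v) :=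
    mulVec_map_eq_smul_mulVec_map_of_inv_mul Complex.ofRealHom hdet heig
  have hker : ((lowerPart A).map (↑) - μ⁻¹ • (negStrictUpperPart A).map (↑)) *ᵥ v = 0 := by
    rw [sub_mulVec, smul_mulVec, hGS, smul_smul, inv_mul_cancel₀ hμ0, one_smul, sub_self]
  have hAv := mulVec_norm_nonpos_of_mulVec_eq_zero
    (fun i => by simpa [lowerPart, negStrictUpperPart] using le_abs_self (A i i))
    (fun i j hij => norm_lowerPart_sub_smul_negStrictUpperPart_le hZ
      (by simpa using inv_le_one_of_one_le₀ hμ) hij) hker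
  exact hv <| funext fun i =>
    norm_le_zero_iff.mp (nonpos_of_mulVec_nonpos hA hinv hAv i)
end

section
/- Let β = √2 − 1 and let X be a finite set of nonzero points in ℝ². Assume that for every unit vector v ∈ ℝ² the open cone {x : ⟨v, x⟩ > (1 + β²)^{-1/2} ‖x‖₂} contains at least one point of X (the cone criterion, with total opening angle 45°). Then a positive Laplace stencil on X exists: there are coefficients s_x ≥ 0, x ∈ X, with Σ_{x∈X} s_x x = 0 and Σ_{x∈X} s_x x x^T = 2 I₂. -/
/-!
Dividing by `‖x‖²`, a positive stencil exists iff `(0, I / 2)` lies in the convex hull of the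
normalized moments `(x, x xᵀ) / ‖x‖²`, `x ∈ X`. Otherwise a separating functional yields `y`, a unit
vector `a` and `r ≥ 0` with `⟪y, x⟫ + r (2 ⟪a, x⟫² - ‖x‖²) < 0` for every `x ∈ X`. Choose an
orthonormal frame `(e₁, e₂)` with `e₁ = ±a` and `y` in the closed quadrant spanned by `e₁, e₂`.
Since `(1 + β²)^(-1/2) = cos (π / 8)`, the cone criterion applied to the direction
`cos (π / 8) e₁ + sin (π / 8) e₂` yields a point of `X` in the open sector between `e₁` and `e₁`
rotated by `π / 4` towards `e₂`, where both terms are nonnegative.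
-/

open Real Module
open scoped InnerProductSpace

lemma cos_pi_div_eight_pos : 0 < cos (π / 8) :=
  cos_pos_of_mem_Ioo ⟨by linarith [pi_pos], by linarith [pi_pos]⟩

lemma sin_pi_div_eight_pos : 0 < sin (π / 8) :=
  sin_pos_of_pos_of_lt_pi (by positivity) (by linarith [pi_pos])

lemma one_add_sq_sqrt_two_sub_one_rpow :
    (1 + (√2 - 1) ^ 2) ^ (-(1 : ℝ) / 2) = cos (π / 8) := by
  have h2 : √2 ^ 2 = 2 := sq_sqrt zero_le_two
  rw [cos_pi_div_eight, neg_div, rpow_neg (by positivity), ← sqrt_eq_rpow,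
    inv_eq_iff_eq_inv, inv_div, eq_div_iff (by positivity), ← sqrt_mul (by positivity),
    show (1 + (√2 - 1) ^ 2) * (2 + √2) = 2 ^ 2 by linear_combination √2 * h2]
  exact sqrt_sq zero_le_two

section InnerProductSpace

variable {F : Type*} [NormedAddCommGroup F] [InnerProductSpace ℝ F]

def ConeCriterion (c : ℝ) (X : Finset F) : Prop :=
  ∀ v : F, ‖v‖ = 1 → ∃ x ∈ X, c * ‖x‖ < ⟪v, x⟫_ℝ

lemma inv_norm_sq_smul_injective : Function.Injective fun x : F => (‖x‖ ^ 2)⁻¹ • x := by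
  convert EuclideanGeometry.inversion_injective (0 : F) one_ne_zero using 1
  ext x
  simp [EuclideanGeometry.inversion]

lemma norm_cos_smul_add_sin_smul {v : Fin 2 → F} (hv : Orthonormal ℝ v) (θ : ℝ) :
    ‖cos θ • v 0 + sin θ • v 1‖ = 1 := by
  have h01 : ⟪v 0, v 1⟫_ℝ = 0 := hv.2 (by decide)
  have hsq : ‖cos θ • v 0 + sin θ • v 1‖ ^ 2 = 1 := by
    rw [norm_add_sq_real, norm_smul, norm_smul, real_inner_smul_left, real_inner_smul_right, h01,
      hv.1 0, hv.1 1, Real.norm_eq_abs, Real.norm_eq_abs, mul_one, mul_one, sq_abs, sq_abs]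
    linarith [sin_sq_add_cos_sq θ]
  exact (pow_eq_one_iff_of_nonneg (norm_nonneg _) two_ne_zero).1 hsq

lemma pos_inner_and_cos_pi_div_four_mul_norm_lt_inner {v : Fin 2 → F} (hv : Orthonormal ℝ v)
    {x : F} (hx : cos (π / 8) * ‖x‖ < ⟪cos (π / 8) • v 0 + sin (π / 8) • v 1, x⟫_ℝ) :
    0 < ⟪v 1, x⟫_ℝ ∧ cos (π / 4) * ‖x‖ < ⟪v 0, x⟫_ℝ := by
  have hbessel : ⟪v 0, x⟫_ℝ ^ 2 + ⟪v 1, x⟫_ℝ ^ 2 ≤ ‖x‖ ^ 2 := by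
    simpa [Fin.sum_univ_two] using hv.sum_inner_products_le x (s := Finset.univ)
  have hα : ⟪v 0, x⟫_ℝ ≤ ‖x‖ := by
    simpa [hv.1 0] using real_inner_le_norm (v 0) x
  have hα' : -‖x‖ ≤ ⟪v 0, x⟫_ℝ := by
    simpa [hv.1 0] using neg_le_of_abs_le (abs_real_inner_le_norm (v 0) x)
  have hc := cos_pi_div_eight_pos
  have hs := sin_pi_div_eight_pos
  have hcs : sin (π / 8) ^ 2 + cos (π / 8) ^ 2 = 1 := sin_sq_add_cos_sq _
  have hcos : cos (π / 4) = cos (π / 8) ^ 2 - sin (π / 8) ^ 2 := by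
    rw [show π / 4 = 2 * (π / 8) by ring, cos_two_mul]; linarith
  rw [inner_add_left, real_inner_smul_left, real_inner_smul_left] at hx
  set r := ‖x‖
  set α := ⟪v 0, x⟫_ℝ
  set γ := ⟪v 1, x⟫_ℝ
  have hγ : 0 < γ := by nlinarith
  refine ⟨hγ, ?_⟩
  -- Square `sin (π / 8) * γ > cos (π / 8) * (r - α) ≥ 0` and use Bessel's `γ² ≤ r² - α²`.
  have hrα : 0 < r - α := by
    by_contra! h
    nlinarith [mul_nonneg (sub_nonneg.2 hα) (neg_le_iff_add_nonneg.1 hα')]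
  have hsq : (cos (π / 8) * (r - α)) ^ 2 < (sin (π / 8) * γ) ^ 2 :=
    pow_lt_pow_left₀ (by linarith) (by positivity) two_ne_zero
  have key : cos (π / 8) ^ 2 * (r - α) < sin (π / 8) ^ 2 * (r + α) := by
    refine lt_of_mul_lt_mul_right ?_ hrα.le
    nlinarith
  rw [hcos]
  nlinarith

lemma exists_orthonormalBasis_eq_or_eq_neg_inner_nonneg (hF : finrank ℝ F = 2) {a : F}
    (ha : ‖a‖ = 1) (y : F) :
    ∃ b : OrthonormalBasis (Fin 2) ℝ F, (b 0 = a ∨ b 0 = -a) ∧ ∀ i, 0 ≤ ⟪b i, y⟫_ℝ := by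
  have : FiniteDimensional ℝ F := Module.finite_of_finrank_eq_succ hF
  obtain ⟨b, hb⟩ := Orthonormal.exists_orthonormalBasis_extension_of_card_eq (𝕜 := ℝ)
    (v := ![a, 0]) (s := {0}) (by simp [hF]) (by
      rw [orthonormal_iff_ite]
      rintro ⟨i, rfl⟩ ⟨j, rfl⟩
      simp [ha])
  let w : Fin 2 → F := fun i => if 0 ≤ ⟪b i, y⟫_ℝ then b i else -b i
  have hw : Orthonormal ℝ w :=
    b.orthonormal.orthonormal_of_forall_eq_or_eq_neg fun i => by unfold w; split_ifs <;> simp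
  refine ⟨(basisOfOrthonormalOfCardEqFinrank hw (by simp [hF])).toOrthonormalBasis
    (by simpa using hw), ?_, fun i => ?_⟩
  · simp only [Module.Basis.coe_toOrthonormalBasis, coe_basisOfOrthonormalOfCardEqFinrank, w,
      hb 0 rfl]
    split_ifs <;> simp
  · simp only [Module.Basis.coe_toOrthonormalBasis, coe_basisOfOrthonormalOfCardEqFinrank, w]
    split_ifs with h
    · exact h
    · rw [inner_neg_left]; linarith

lemma ConeCriterion.exists_inner_nonneg_and_norm_sq_le (hF : finrank ℝ F = 2) {X : Finset F}
    (hX : ConeCriterion (cos (π / 8)) X) (y : F) {a : F} (ha : ‖a‖ = 1) :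
    ∃ x ∈ X, x ≠ 0 ∧ 0 ≤ ⟪y, x⟫_ℝ ∧ ‖x‖ ^ 2 ≤ 2 * ⟪a, x⟫_ℝ ^ 2 := by
  obtain ⟨b, hb0, hby⟩ := exists_orthonormalBasis_eq_or_eq_neg_inner_nonneg hF ha y
  obtain ⟨x, hxX, hx⟩ := hX _ (norm_cos_smul_add_sin_smul b.orthonormal (π / 8))
  obtain ⟨h₁, h₀⟩ := pos_inner_and_cos_pi_div_four_mul_norm_lt_inner b.orthonormal hx
  rw [cos_pi_div_four] at h₀
  have h₀' : 0 ≤ ⟪b 0, x⟫_ℝ := le_trans (by positivity) h₀.le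
  refine ⟨x, hxX, fun h => by simp [h] at h₁, ?_, ?_⟩
  · rw [← b.sum_inner_mul_inner y x, Fin.sum_univ_two, real_inner_comm (b 0) y,
      real_inner_comm (b 1) y]
    exact add_nonneg (mul_nonneg (hby 0) h₀') (mul_nonneg (hby 1) h₁.le)
  · have hab : ⟪a, x⟫_ℝ ^ 2 = ⟪b 0, x⟫_ℝ ^ 2 := by
      rcases hb0 with h | h <;> simp [h]
    have h2 : √2 ^ 2 = 2 := sq_sqrt zero_le_two
    rw [hab]
    nlinarith [mul_self_le_mul_self (by positivity) h₀.le]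

end InnerProductSpace

lemma exists_two_mul_sq_sub_eq (p q : ℝ) :
    ∃ r θ : ℝ, 0 ≤ r ∧ ∀ s t : ℝ,
      p * (s ^ 2 - t ^ 2) + 2 * q * (s * t) =
        r * (2 * (cos θ * s + sin θ * t) ^ 2 - (s ^ 2 + t ^ 2)) := by
  set z : ℂ := ⟨p, q⟩
  refine ⟨‖z‖, z.arg / 2, norm_nonneg z, fun s t => ?_⟩
  have hp : ‖z‖ * cos (2 * (z.arg / 2)) = p := by
    rw [mul_div_cancel₀ _ two_ne_zero]; exact Complex.norm_mul_cos_arg z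
  have hq : ‖z‖ * sin (2 * (z.arg / 2)) = q := by
    rw [mul_div_cancel₀ _ two_ne_zero]; exact Complex.norm_mul_sin_arg z
  rw [cos_two_mul] at hp
  rw [sin_two_mul] at hq
  linear_combination (-(s ^ 2 - t ^ 2)) * hp - 2 * s * t * hq
    - 2 * ‖z‖ * t ^ 2 * sin_sq_add_cos_sq (z.arg / 2)

local notation "ℝ²" => EuclideanSpace ℝ (Fin 2)

lemma inner_eq_of_fin_two (a x : ℝ²) : ⟪a, x⟫_ℝ = a 0 * x 0 + a 1 * x 1 := by
  simp [PiLp.inner_apply, Fin.sum_univ_two, mul_comm]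

lemma norm_sq_eq_of_fin_two (x : ℝ²) : ‖x‖ ^ 2 = x 0 ^ 2 + x 1 ^ 2 := by
  simp [EuclideanSpace.real_norm_sq_eq, Fin.sum_univ_two]

/- The second component is taken in `Fin 2 → Fin 2 → ℝ` rather than `Matrix (Fin 2) (Fin 2) ℝ`,
which has no `LocallyConvexSpace` instance for the Hahn–Banach separation theorem. -/
noncomputable def normalizedMoments (x : ℝ²) : ℝ² × (Fin 2 → Fin 2 → ℝ) :=
  (‖x‖ ^ 2)⁻¹ • (x, fun i j => x i * x j)

noncomputable def laplaceMoments : ℝ² × (Fin 2 → Fin 2 → ℝ) :=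
  (0, (2⁻¹ : ℝ) • (1 : Matrix (Fin 2) (Fin 2) ℝ))

lemma exists_apply_moments_eq (f : ℝ² × (Fin 2 → Fin 2 → ℝ) →L[ℝ] ℝ) :
    ∃ y a : ℝ², ‖a‖ = 1 ∧ ∃ r : ℝ, 0 ≤ r ∧ ∀ x : ℝ²,
      f (x, fun i j => x i * x j) =
        ⟪y, x⟫_ℝ + r * (2 * ⟪a, x⟫_ℝ ^ 2 - ‖x‖ ^ 2) + f laplaceMoments * ‖x‖ ^ 2 := by
  let g := f.comp (.inr ℝ ℝ² (Fin 2 → Fin 2 → ℝ))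
  let E : Fin 2 → Fin 2 → Fin 2 → Fin 2 → ℝ := fun i j => Pi.single i (Pi.single j 1)
  have hI : f laplaceMoments = 2⁻¹ * (g (E 0 0) + g (E 1 1)) := by
    have : laplaceMoments = (0, (2⁻¹ : ℝ) • (E 0 0 + E 1 1)) := by
      ext i j
      · simp [laplaceMoments]
      · fin_cases i <;> fin_cases j <;> simp [laplaceMoments, E]
    rw [this]
    change g ((2⁻¹ : ℝ) • (E 0 0 + E 1 1)) = _
    rw [map_smul, map_add, smul_eq_mul]
  obtain ⟨r, θ, hr, hrθ⟩ :=
    exists_two_mul_sq_sub_eq ((g (E 0 0) - g (E 1 1)) / 2) ((g (E 0 1) + g (E 1 0)) / 2)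
  refine ⟨(InnerProductSpace.toDual ℝ ℝ²).symm (f.comp (.inl ℝ ℝ² _)), !₂[cos θ, sin θ],
    by simp [EuclideanSpace.norm_eq, Fin.sum_univ_two], r, hr, fun x => ?_⟩
  have hM : (fun i j => x i * x j : Fin 2 → Fin 2 → ℝ) =
      x 0 ^ 2 • E 0 0 + (x 0 * x 1) • (E 0 1 + E 1 0) + x 1 ^ 2 • E 1 1 := by
    ext i j; fin_cases i <;> fin_cases j <;> simp [E, sq, mul_comm]
  have hsplit : f (x, fun i j => x i * x j) = f (x, 0) + g (fun i j => x i * x j) := by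
    rw [show (x, fun i j => x i * x j) = (x, 0) + ((0 : ℝ²), fun i j => x i * x j) by simp,
      map_add]
    rfl
  rw [hsplit, InnerProductSpace.toDual_symm_apply, hM, inner_eq_of_fin_two,
    norm_sq_eq_of_fin_two, hI]
  simp only [map_add, map_smul, smul_eq_mul, ContinuousLinearMap.comp_apply,
    ContinuousLinearMap.inl_apply, Matrix.cons_val_zero, Matrix.cons_val_one]
  linear_combination hrθ (x 0) (x 1)

lemma ConeCriterion.laplaceMoments_mem_convexHull {X : Finset ℝ²}
    (hX : ConeCriterion (cos (π / 8)) X) :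
    laplaceMoments ∈
      convexHull ℝ (X.image normalizedMoments : Set (ℝ² × (Fin 2 → Fin 2 → ℝ))) := by
  by_contra h
  obtain ⟨f, u, hfu, huf⟩ := geometric_hahn_banach_closed_point (convex_convexHull ℝ _)
    ((X.image normalizedMoments).finite_toSet.isClosed_convexHull ℝ) h
  obtain ⟨y, a, ha, r, hr, hf⟩ := exists_apply_moments_eq f
  obtain ⟨x, hxX, hx0, hyx, hax⟩ :=
    hX.exists_inner_nonneg_and_norm_sq_le finrank_euclideanSpace_fin y ha
  have hlt : f (normalizedMoments x) < f laplaceMoments :=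
    (hfu _ (subset_convexHull ℝ _ (by simpa using ⟨x, hxX, rfl⟩))).trans huf
  have hx : 0 < ‖x‖ ^ 2 := by positivity
  rw [normalizedMoments, map_smul, hf, smul_eq_mul, inv_mul_lt_iff₀ hx] at hlt
  nlinarith [mul_nonneg hr (sub_nonneg.2 hax)]

lemma exists_stencil_of_laplaceMoments_mem_convexHull {X : Finset ℝ²}
    (h : laplaceMoments ∈
      convexHull ℝ (X.image normalizedMoments : Set (ℝ² × (Fin 2 → Fin 2 → ℝ)))) :
    ∃ s : ℝ² → ℝ, (∀ x ∈ X, 0 ≤ s x) ∧ (∑ x ∈ X, s x • x) = 0 ∧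
      (∑ x ∈ X, s x • Matrix.of (fun a b => x a * x b)) =
        (2 : ℝ) • (1 : Matrix (Fin 2) (Fin 2) ℝ) := by
  obtain ⟨w, hw0, -, hw⟩ := Finset.mem_convexHull'.1 h
  rw [Finset.sum_image fun x _ y _ hxy => inv_norm_sq_smul_injective (congrArg Prod.fst hxy)] at hw
  refine ⟨fun x => 4 * (w (normalizedMoments x) * (‖x‖ ^ 2)⁻¹), fun x hx => ?_, ?_, ?_⟩
  · have := hw0 _ (Finset.mem_image_of_mem _ hx)
    positivity
  · have h1 := congrArg Prod.fst hw
    simp only [Prod.fst_sum, Prod.smul_fst] at h1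
    simp only [mul_smul, ← Finset.smul_sum]
    exact (congrArg _ h1).trans (smul_zero _)
  · have h2 := congrArg Prod.snd hw
    simp only [Prod.snd_sum, Prod.smul_snd] at h2
    simp only [mul_smul, ← Finset.smul_sum]
    refine (congrArg _ h2).trans ?_
    simp only [laplaceMoments, smul_smul]
    norm_num

theorem cone_criterion_positive_stencil_2d_general (β : ℝ) (hβ : β = Real.sqrt 2 - 1)
    (X : Finset (EuclideanSpace ℝ (Fin 2)))
    (hcone : ∀ v : EuclideanSpace ℝ (Fin 2), ‖v‖ = 1 →
      ∃ x ∈ X, (1 + β ^ 2) ^ (-(1 : ℝ) / 2) * ‖x‖ < (inner ℝ v x : ℝ)) :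
    ∃ s : EuclideanSpace ℝ (Fin 2) → ℝ,
      (∀ x ∈ X, 0 ≤ s x) ∧
      (∑ x ∈ X, s x • x) = 0 ∧
      (∑ x ∈ X, s x • Matrix.of (fun a b => x a * x b))
        = (2 : ℝ) • (1 : Matrix (Fin 2) (Fin 2) ℝ) := by
  rw [hβ, one_add_sq_sqrt_two_sub_one_rpow] at hcone
  exact exists_stencil_of_laplaceMoments_mem_convexHull
    (ConeCriterion.laplaceMoments_mem_convexHull hcone)

/-- Sufficient cone criterion for positive stencils in 2d: with `β = √2 - 1`, if for
every unit vector `v` the open cone `{x : ⟨v, x⟩ > (1 + β²)^(-1/2) ‖x‖₂}` contains a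
point of the finite set `X` of nonzero points, then a positive Laplace stencil on `X`
exists: nonnegative coefficients `s` with `∑ x ∈ X, s x • x = 0` and
`∑ x ∈ X, s x • (x xᵀ) = 2 I₂`. -/
theorem cone_criterion_positive_stencil_2d (β : ℝ) (hβ : β = Real.sqrt 2 - 1)
    (X : Finset (EuclideanSpace ℝ (Fin 2)))
    (hX : ∀ x ∈ X, x ≠ 0)
    (hcone : ∀ v : EuclideanSpace ℝ (Fin 2), ‖v‖ = 1 →
      ∃ x ∈ X, (1 + β ^ 2) ^ (-(1 : ℝ) / 2) * ‖x‖ < (inner ℝ v x : ℝ)) :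
    ∃ s : EuclideanSpace ℝ (Fin 2) → ℝ,
      (∀ x ∈ X, 0 ≤ s x) ∧
      (∑ x ∈ X, s x • x) = 0 ∧
      (∑ x ∈ X, s x • Matrix.of (fun a b => x a * x b))
        = (2 : ℝ) • (1 : Matrix (Fin 2) (Fin 2) ℝ) :=
  cone_criterion_positive_stencil_2d_general β hβ X hcone
end
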